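/- Let A be a symmetric idempotent n×n real matrix of rank j, and let u = (u_1, …, u_n) be a vector of independent random variables with E u_i = 0 and E e^{t u_i} ≤ e^{t²/2} for all t ∈ ℝ. Then for every t > 0, P( uᵀ A u > j + 2√(j t) + 2 t ) ≤ e^{−t}. -/

import Mathlib

open MeasureTheory ProbabilityTheory Matrix Real

/-!
A symmetric idempotent matrix of rank `j` factors as `A = Vᵀ V` with `V` a `j × n` matrix with
orthonormal rows, so `uᵀ A u = ‖V u‖²`. Since a linear form `s ⬝ u` of independent
`1`-subgaussian variables is subgaussian with variance proxy `‖s‖²`, the vector `Z = V u` has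
`E exp (s ⬝ Z) ≤ exp (‖s‖² / 2)` for every `s`. Writing `exp (λ ‖z‖²)` as a Gaussian integral
of `exp (s ⬝ z)` over `s ∈ ℝʲ` and exchanging the two integrals then gives
`E exp (λ ‖Z‖²) ≤ (1 - 2λ)^(-j/2)` for `0 < λ < 1/2`. The Chernoff bound with
`λ = (√(jt) + t) / (j + 2√(jt) + 2t)` together with `1 + 2x + 2x² ≤ exp (2x)` yields the claim.
-/

namespace Matrix

theorem dotProduct_transpose_mul_mulVec {m n R : Type*} [Fintype m] [Fintype n] [CommSemiring R]
    (V : Matrix m n R) (x : n → R) : x ⬝ᵥ (Vᵀ * V) *ᵥ x = (V *ᵥ x) ⬝ᵥ (V *ᵥ x) := by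
  rw [← mulVec_mulVec, dotProduct_mulVec, vecMul_transpose]

theorem exists_mul_transpose_eq_one_and_transpose_mul_eq {n : Type*} [Fintype n] [DecidableEq n]
    {A : Matrix n n ℝ} (hA : Aᵀ = A) (hA2 : IsIdempotentElem A) :
    ∃ V : Matrix (Fin A.rank) n ℝ, V * Vᵀ = 1 ∧ Vᵀ * V = A := by
  have hAh : A.IsHermitian := by rwa [IsHermitian, conjTranspose_eq_transpose_of_trivial]
  set μ := hAh.eigenvalues
  set U : Matrix n n ℝ := (hAh.eigenvectorUnitary : Matrix n n ℝ)
  have hUU : Uᵀ * U = 1 := by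
    rw [← conjTranspose_eq_transpose_of_trivial, ← star_eq_conjTranspose]
    exact Unitary.coe_star_mul_self _
  have hspec : A = U * diagonal μ * Uᵀ := by
    conv_lhs => rw [hAh.spectral_theorem]
    simp [Unitary.conjStarAlgAut_apply, U, μ, star_eq_conjTranspose]
  have hμ : ∀ l, μ l ≠ 0 → μ l = 1 := fun l h0 =>
    (hA2.spectrum_subset ℝ (hAh.eigenvalues_mem_spectrum_real l)).resolve_left h0
  let S := {l // μ l ≠ 0}
  let W : Matrix S n ℝ := Uᵀ.submatrix Subtype.val id
  let e : Fin A.rank ≃ S :=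
    Fintype.equivOfCardEq (by rw [Fintype.card_fin]; exact hAh.rank_eq_card_non_zero_eigs)
  refine ⟨W.submatrix e (Equiv.refl n), ?_, ?_⟩
  · have hW : W * Wᵀ = 1 := by
      rw [transpose_submatrix, transpose_transpose, ← submatrix_mul _ _ _ _ _ Function.bijective_id,
        hUU, submatrix_one _ Subtype.val_injective]
    rw [transpose_submatrix, submatrix_mul_equiv, hW, submatrix_one_equiv]
  · have hW : Wᵀ * W = A := by
      ext i i'
      calc (Wᵀ * W) i i' = ∑ k : S, U i k * U i' k := rfl
        _ = ∑ l, if μ l ≠ 0 then U i l * U i' l else 0 := by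
          rw [← Finset.sum_filter]
          exact (Finset.sum_subtype _ (fun l => by simp) fun l => U i l * U i' l).symm
        _ = ∑ l, U i l * μ l * U i' l := Finset.sum_congr rfl fun l _ => by
          by_cases h0 : μ l = 0 <;> simp [h0, hμ]
        _ = A i i' := by
          conv_rhs => rw [hspec, mul_apply]
          simp only [mul_diagonal, transpose_apply]
    rw [transpose_submatrix, submatrix_mul_equiv, hW, Equiv.coe_refl, submatrix_id_id]

end Matrix

theorem exp_neg_mul_sq_add_mul_eq {b : ℝ} (hb : 0 < b) (z x : ℝ) :
    exp (-b * x ^ 2 + z * x) = exp (z ^ 2 / (4 * b)) * exp (-b * (x - z / (2 * b)) ^ 2) := by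
  rw [← exp_add]; congr 1; field_simp; ring

theorem integrable_exp_neg_mul_sq_add_mul {b : ℝ} (hb : 0 < b) (z : ℝ) :
    Integrable fun x => exp (-b * x ^ 2 + z * x) := by
  simp_rw [exp_neg_mul_sq_add_mul_eq hb z]
  exact ((integrable_exp_neg_mul_sq hb).comp_sub_right _).const_mul _

theorem integral_exp_neg_mul_sq_add_mul {b : ℝ} (hb : 0 < b) (z : ℝ) :
    ∫ x, exp (-b * x ^ 2 + z * x) = √(π / b) * exp (z ^ 2 / (4 * b)) := by
  simp_rw [exp_neg_mul_sq_add_mul_eq hb z]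
  rw [integral_const_mul, integral_sub_right_eq_self (fun x => exp (-b * x ^ 2)), integral_gaussian,
    mul_comm]

theorem lintegral_exp_neg_mul_dotProduct_add {ι : Type*} [Fintype ι] {b : ℝ} (hb : 0 < b)
    (z : ι → ℝ) :
    ∫⁻ s : ι → ℝ, ENNReal.ofReal (exp (-b * (s ⬝ᵥ s) + s ⬝ᵥ z)) =
      ENNReal.ofReal (√(π / b) ^ Fintype.card ι * exp (z ⬝ᵥ z / (4 * b))) := by
  have hprod : ∀ s : ι → ℝ, exp (-b * (s ⬝ᵥ s) + s ⬝ᵥ z) = ∏ i, exp (-b * s i ^ 2 + z i * s i) := by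
    intro s
    simp only [← exp_sum, Finset.sum_add_distrib, dotProduct, Finset.mul_sum, sq, mul_comm (z _)]
  have hint : Integrable fun s : ι → ℝ => ∏ i, exp (-b * s i ^ 2 + z i * s i) :=
    Integrable.fintype_prod fun i => integrable_exp_neg_mul_sq_add_mul hb (z i)
  simp_rw [hprod]
  rw [← ofReal_integral_eq_lintegral_ofReal hint
      (ae_of_all _ fun s => Finset.prod_nonneg fun i _ => (exp_pos _).le),
    integral_fintype_prod_volume_eq_prod (fun i x => exp (-b * x ^ 2 + z i * x))]
  simp only [integral_exp_neg_mul_sq_add_mul hb]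
  rw [Finset.prod_mul_distrib, Finset.prod_const, Finset.card_univ, ← exp_sum]
  simp only [dotProduct, Finset.sum_div, sq]

theorem measure_lt_le_exp_neg_mul_lintegral_exp {Ω : Type*} [MeasurableSpace Ω] {μ : Measure Ω}
    {X : Ω → ℝ} (hX : AEMeasurable X μ) {l : ℝ} (hl : 0 ≤ l) (a : ℝ) :
    μ {ω | a < X ω} ≤
      ENNReal.ofReal (exp (-(l * a))) * ∫⁻ ω, ENNReal.ofReal (exp (l * X ω)) ∂μ := by
  set ε := ENNReal.ofReal (exp (l * a))
  have hε : ENNReal.ofReal (exp (-(l * a))) * ε = 1 := by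
    rw [← ENNReal.ofReal_mul (exp_pos _).le, ← exp_add, neg_add_cancel, exp_zero,
      ENNReal.ofReal_one]
  calc μ {ω | a < X ω} ≤ μ {ω | ε ≤ ENNReal.ofReal (exp (l * X ω))} :=
        measure_mono fun ω hω => ENNReal.ofReal_le_ofReal (exp_le_exp.mpr
          (mul_le_mul_of_nonneg_left (le_of_lt hω) hl))
    _ = ENNReal.ofReal (exp (-(l * a))) * (ε * μ {ω | ε ≤ ENNReal.ofReal (exp (l * X ω))}) := by
        rw [← mul_assoc, hε, one_mul]
    _ ≤ ENNReal.ofReal (exp (-(l * a))) * ∫⁻ ω, ENNReal.ofReal (exp (l * X ω)) ∂μ := by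
        gcongr
        exact mul_meas_ge_le_lintegral₀ (by fun_prop) ε

theorem exp_neg_mul_sqrt_div_pow_le {r : ℕ} (hr : 0 < r) {t : ℝ} (ht : 0 ≤ t) :
    exp (-(√(r * t) + t)) * √((r + 2 * √(r * t) + 2 * t) / r) ^ r ≤ exp (-t) := by
  have hr' : (0 : ℝ) < r := Nat.cast_pos.mpr hr
  set s := √(t / r)
  have hs : 0 ≤ s := Real.sqrt_nonneg _
  have hts : t = r * s ^ 2 := by
    rw [Real.sq_sqrt (div_nonneg ht hr'.le)]; field_simp
  have hrt : √(r * t) = r * s := by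
    rw [hts, ← mul_assoc, ← sq, Real.sqrt_mul (sq_nonneg _), Real.sqrt_sq hr'.le, Real.sqrt_sq hs]
  have hbase : √((r + 2 * √(r * t) + 2 * t) / r) ≤ exp s := by
    rw [Real.sqrt_le_iff, ← exp_nat_mul]
    refine ⟨(exp_pos _).le, ?_⟩
    rw [hrt, hts, div_le_iff₀ hr']
    have := Real.quadratic_le_exp_of_nonneg (by positivity : 0 ≤ (2 : ℕ) * s)
    push_cast at this ⊢
    nlinarith
  calc exp (-(√(r * t) + t)) * √((r + 2 * √(r * t) + 2 * t) / r) ^ r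
      ≤ exp (-(√(r * t) + t)) * exp s ^ r := by gcongr
    _ = exp (-t) := by rw [← exp_nat_mul, ← exp_add, hrt]; ring_nf

section StdSubgaussian

variable {Ω ι : Type*} [MeasurableSpace Ω] [Fintype ι]

/-- Stated with the lower Lebesgue integral, so that no integrability hypothesis is needed. -/
def HasStdSubgaussianMGF (Z : Ω → ι → ℝ) (P : Measure Ω) : Prop :=
  ∀ s : ι → ℝ, ∫⁻ ω, ENNReal.ofReal (exp (s ⬝ᵥ Z ω)) ∂P ≤ ENNReal.ofReal (exp (s ⬝ᵥ s / 2))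

theorem hasStdSubgaussianMGF_of_iIndepFun {P : Measure Ω} {u : ι → Ω → ℝ} (hindep : iIndepFun u P)
    (hu : ∀ i, HasSubgaussianMGF (u i) 1 P) : HasStdSubgaussianMGF (fun ω i => u i ω) P := by
  intro s
  have hsum : HasSubgaussianMGF (fun ω => ∑ i, s i * u i ω) (∑ i, (s i ^ 2).toNNReal) P :=
    HasSubgaussianMGF.sum_of_iIndepFun
      (hindep.comp (fun i x => s i * x) fun i => measurable_const_mul (s i)) fun i _ => by
        convert (hu i).const_mul (s i) using 1
        · rfl
        · exact (Real.toNNReal_of_nonneg (sq_nonneg _)).trans (mul_one _).symm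
  calc ∫⁻ ω, ENNReal.ofReal (exp (s ⬝ᵥ fun i => u i ω)) ∂P
      = ENNReal.ofReal (mgf (fun ω => ∑ i, s i * u i ω) P 1) := by
        rw [mgf, ofReal_integral_eq_lintegral_ofReal (by simpa using hsum.integrable_exp_mul 1)
          (ae_of_all _ fun _ => (exp_pos _).le)]
        simp [dotProduct]
    _ ≤ ENNReal.ofReal (exp (s ⬝ᵥ s / 2)) := by
        grw [hsum.mgf_le]
        simp [max_eq_left (mul_self_nonneg _), dotProduct, sq, Finset.sum_div]

theorem HasStdSubgaussianMGF.mulVec {P : Measure Ω} {Z : Ω → ι → ℝ}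
    (hZ : HasStdSubgaussianMGF Z P) {κ : Type*} [Fintype κ] [DecidableEq κ] {V : Matrix κ ι ℝ}
    (hV : V * Vᵀ = 1) : HasStdSubgaussianMGF (fun ω => V *ᵥ Z ω) P := by
  intro s
  have hnorm : (Vᵀ *ᵥ s) ⬝ᵥ (Vᵀ *ᵥ s) = s ⬝ᵥ s := by
    rw [← dotProduct_transpose_mul_mulVec, transpose_transpose, hV, one_mulVec]
  simpa only [dotProduct_mulVec, ← mulVec_transpose, hnorm] using hZ (Vᵀ *ᵥ s)

theorem HasStdSubgaussianMGF.lintegral_exp_neg_mul_add_le {P : Measure Ω} {Z : Ω → ι → ℝ}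
    (hZ : HasStdSubgaussianMGF Z P) (b : ℝ) (s : ι → ℝ) :
    ∫⁻ ω, ENNReal.ofReal (exp (-b * (s ⬝ᵥ s) + s ⬝ᵥ Z ω)) ∂P ≤
      ENNReal.ofReal (exp (-(b - 1 / 2) * (s ⬝ᵥ s))) := by
  simp_rw [exp_add, ENNReal.ofReal_mul (exp_pos _).le]
  rw [lintegral_const_mul' _ _ ENNReal.ofReal_ne_top]
  grw [hZ s]
  rw [← ENNReal.ofReal_mul (exp_pos _).le, ← exp_add]
  apply le_of_eq; congr 2; ring

theorem HasStdSubgaussianMGF.mul_lintegral_exp_dotProduct_self_div_le {P : Measure Ω} [SFinite P]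
    {Z : Ω → ι → ℝ} (hZ : HasStdSubgaussianMGF Z P) (hZm : AEMeasurable Z P) {b : ℝ}
    (hb : 1 / 2 < b) :
    ENNReal.ofReal (√(π / b) ^ Fintype.card ι) *
        ∫⁻ ω, ENNReal.ofReal (exp (Z ω ⬝ᵥ Z ω / (4 * b))) ∂P ≤
      ENNReal.ofReal (√(π / (b - 1 / 2)) ^ Fintype.card ι) := by
  have hmeas : AEMeasurable (Function.uncurry fun ω (s : ι → ℝ) =>
      ENNReal.ofReal (exp (-b * (s ⬝ᵥ s) + s ⬝ᵥ Z ω))) (P.prod volume) := by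
    have hF : Continuous fun q : (ι → ℝ) × (ι → ℝ) => exp (-b * (q.1 ⬝ᵥ q.1) + q.1 ⬝ᵥ q.2) := by
      fun_prop
    exact hF.measurable.ennreal_ofReal.comp_aemeasurable (f := fun p : Ω × (ι → ℝ) => (p.2, Z p.1))
      (measurable_snd.aemeasurable.prodMk hZm.comp_fst)
  calc ENNReal.ofReal (√(π / b) ^ Fintype.card ι) *
        ∫⁻ ω, ENNReal.ofReal (exp (Z ω ⬝ᵥ Z ω / (4 * b))) ∂P
      = ∫⁻ ω, (∫⁻ s, ENNReal.ofReal (exp (-b * (s ⬝ᵥ s) + s ⬝ᵥ Z ω))) ∂P := by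
        rw [← lintegral_const_mul' _ _ ENNReal.ofReal_ne_top]
        simp_rw [lintegral_exp_neg_mul_dotProduct_add (by linarith : 0 < b),
          ENNReal.ofReal_mul (pow_nonneg (Real.sqrt_nonneg _) _)]
    _ = ∫⁻ s, ∫⁻ ω, ENNReal.ofReal (exp (-b * (s ⬝ᵥ s) + s ⬝ᵥ Z ω)) ∂P :=
        lintegral_lintegral_swap hmeas
    _ ≤ ∫⁻ s : ι → ℝ, ENNReal.ofReal (exp (-(b - 1 / 2) * (s ⬝ᵥ s))) :=
        lintegral_mono (hZ.lintegral_exp_neg_mul_add_le b)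
    _ = ENNReal.ofReal (√(π / (b - 1 / 2)) ^ Fintype.card ι) := by
        simpa using lintegral_exp_neg_mul_dotProduct_add (by linarith : 0 < b - 1 / 2) (0 : ι → ℝ)

theorem HasStdSubgaussianMGF.lintegral_exp_mul_dotProduct_self_le {P : Measure Ω} [SFinite P]
    {Z : Ω → ι → ℝ} (hZ : HasStdSubgaussianMGF Z P) (hZm : AEMeasurable Z P) {l : ℝ}
    (hl0 : 0 < l) (hl : l < 1 / 2) :
    ∫⁻ ω, ENNReal.ofReal (exp (l * (Z ω ⬝ᵥ Z ω))) ∂P ≤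
      ENNReal.ofReal ((√(1 - 2 * l))⁻¹ ^ Fintype.card ι) := by
  set b := 1 / (4 * l)
  have hb : 1 / 2 < b := by
    simp only [b]; rw [lt_div_iff₀ (by positivity)]; linarith
  have hc : 0 < √(π / b) := Real.sqrt_pos.mpr (div_pos pi_pos (by linarith))
  have hratio : √(π / (b - 1 / 2)) = √(π / b) * (√(1 - 2 * l))⁻¹ := by
    have hb2 : b - 1 / 2 = b * (1 - 2 * l) := by simp only [b]; field_simp; ring
    rw [← Real.sqrt_inv, ← Real.sqrt_mul (div_pos pi_pos (by linarith)).le, hb2, ← div_div,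
      div_eq_mul_inv]
  have hdiv : ∀ x : ℝ, x / (4 * b) = l * x := fun x => by simp only [b]; field_simp
  have hmain := hZ.mul_lintegral_exp_dotProduct_self_div_le hZm hb
  simp_rw [hdiv, hratio, mul_pow, ENNReal.ofReal_mul (pow_nonneg hc.le _)] at hmain
  exact (ENNReal.mul_le_mul_iff_right
    (ENNReal.ofReal_pos.mpr (pow_pos hc _)).ne' ENNReal.ofReal_ne_top).mp hmain

theorem HasStdSubgaussianMGF.measure_lt_dotProduct_self_le {P : Measure Ω} [SFinite P]
    {Z : Ω → ι → ℝ} (hZ : HasStdSubgaussianMGF Z P) (hZm : AEMeasurable Z P) {t : ℝ} (ht : 0 < t) :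
    P {ω | Fintype.card ι + 2 * √(Fintype.card ι * t) + 2 * t < Z ω ⬝ᵥ Z ω} ≤
      ENNReal.ofReal (exp (-t)) := by
  set r := Fintype.card ι
  set a : ℝ := r + 2 * √(r * t) + 2 * t
  rcases Nat.eq_zero_or_pos r with hr | hr
  · have : IsEmpty ι := Fintype.card_eq_zero_iff.mp hr
    have ha : 0 < a := by simp only [a, hr]; positivity
    simp [dotProduct, ha.not_gt]
  set g := √(r * t) + t
  have hg : 0 < g := by positivity
  have ha : a = r + 2 * g := by ring
  have hr' : (0 : ℝ) < r := Nat.cast_pos.mpr hr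
  have hapos : 0 < a := by rw [ha]; positivity
  set l := g / a
  have hl0 : 0 < l := div_pos hg hapos
  have hl : l < 1 / 2 := by rw [div_lt_iff₀ hapos]; linarith
  have hla : l * a = g := div_mul_cancel₀ g hapos.ne'
  have hsqrt : (√(1 - 2 * l))⁻¹ = √(a / r) := by
    have h12 : 1 - 2 * l = r / a := by
      simp only [l]; field_simp; linarith
    rw [h12, ← Real.sqrt_inv, inv_div]
  have hQm : AEMeasurable (fun ω => Z ω ⬝ᵥ Z ω) P :=
    (continuous_id.dotProduct continuous_id).measurable.comp_aemeasurable hZm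
  calc P {ω | a < Z ω ⬝ᵥ Z ω}
      ≤ ENNReal.ofReal (exp (-(l * a))) * ∫⁻ ω, ENNReal.ofReal (exp (l * (Z ω ⬝ᵥ Z ω))) ∂P :=
        measure_lt_le_exp_neg_mul_lintegral_exp hQm hl0.le a
    _ ≤ ENNReal.ofReal (exp (-(l * a))) * ENNReal.ofReal ((√(1 - 2 * l))⁻¹ ^ r) := by
        gcongr
        exact hZ.lintegral_exp_mul_dotProduct_self_le hZm hl0 hl
    _ = ENNReal.ofReal (exp (-g) * √(a / r) ^ r) := by
        rw [← ENNReal.ofReal_mul (exp_pos _).le, hla, hsqrt]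
    _ ≤ ENNReal.ofReal (exp (-t)) := ENNReal.ofReal_le_ofReal (exp_neg_mul_sqrt_div_pow_le hr ht.le)

end StdSubgaussian

theorem quadform_tail_bound_general
    {Ω : Type} [MeasurableSpace Ω] (P : Measure Ω) [IsProbabilityMeasure P]
    {n j : ℕ} (A : Matrix (Fin n) (Fin n) ℝ)
    (hAsymm : Aᵀ = A) (hAidem : A * A = A) (hArank : A.rank = j)
    (u : Fin n → Ω → ℝ)
    (hmeas : ∀ i, Measurable (u i))
    (hindep : iIndepFun u P)
    (hmgfint : ∀ i (t : ℝ), Integrable (fun ω => Real.exp (t * u i ω)) P)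
    (hsubg : ∀ i (t : ℝ), ∫ ω, Real.exp (t * u i ω) ∂P ≤ Real.exp (t ^ 2 / 2))
    (t : ℝ) (ht : 0 < t) :
    P {ω | (fun i => u i ω) ⬝ᵥ A.mulVec (fun i => u i ω) >
        (j : ℝ) + 2 * Real.sqrt (j * t) + 2 * t} ≤ ENNReal.ofReal (Real.exp (-t)) := by
  subst hArank
  obtain ⟨V, hVV, hVA⟩ := exists_mul_transpose_eq_one_and_transpose_mul_eq hAsymm hAidem
  have hu : HasStdSubgaussianMGF (fun ω i => u i ω) P :=
    hasStdSubgaussianMGF_of_iIndepFun hindep fun i =>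
      ⟨hmgfint i, fun t => by simpa [mgf] using hsubg i t⟩
  have hZm : AEMeasurable (fun ω => V *ᵥ fun i => u i ω) P :=
    (continuous_const.matrix_mulVec continuous_id).measurable.comp_aemeasurable
      (measurable_pi_lambda _ hmeas).aemeasurable
  simpa [← hVA, dotProduct_transpose_mul_mulVec] using
    (hu.mulVec hVV).measure_lt_dotProduct_self_le hZm ht

/-- If `A` is a symmetric idempotent `n × n` real matrix of rank `j` and
`u₁,…,uₙ` are independent subgaussian random variables with variance proxy `1`, then for every
`t > 0`, `P(uᵀAu > j + 2√(jt) + 2t) ≤ e^{-t}`. -/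
theorem quadform_tail_bound
    {Ω : Type} [MeasurableSpace Ω] (P : Measure Ω) [IsProbabilityMeasure P]
    {n j : ℕ} (A : Matrix (Fin n) (Fin n) ℝ)
    (hAsymm : Aᵀ = A) (hAidem : A * A = A) (hArank : A.rank = j)
    (u : Fin n → Ω → ℝ)
    (hmeas : ∀ i, Measurable (u i))
    (hindep : iIndepFun u P)
    (hint : ∀ i, Integrable (u i) P)
    (hmean : ∀ i, ∫ ω, u i ω ∂P = 0)
    (hmgfint : ∀ i (t : ℝ), Integrable (fun ω => Real.exp (t * u i ω)) P)
    (hsubg : ∀ i (t : ℝ), ∫ ω, Real.exp (t * u i ω) ∂P ≤ Real.exp (t ^ 2 / 2))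
    (t : ℝ) (ht : 0 < t) :
    P {ω | (fun i => u i ω) ⬝ᵥ A.mulVec (fun i => u i ω) >
        (j : ℝ) + 2 * Real.sqrt (j * t) + 2 * t} ≤ ENNReal.ofReal (Real.exp (-t)) :=
  quadform_tail_bound_general P A hAsymm hAidem hArank u hmeas hindep hmgfint hsubg t ht
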